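/- Soundness of CC(𝒳): assume M is Π-closed for some ground term in M for every state Π in the run. For any run of ⇒_CC(𝒳) starting from the initial state Π₀ for E and M, any state Π' in this run, any class A ∈ Π', any constrained terms Γ ∥ s and Δ ∥ t in norm(A), and any grounding substitution σ such that Γσ and Δσ are satisfiable, it holds that gnd_M(E) ⊨ sσ ≈ tσ. -/

import Mathlib

/-!
Soundness follows from an invariant of the reachable states that is stronger than the
statement: two terms of a class, instantiated by substitutions that agree on the separating
variables and satisfy the respective constraints, are equal modulo `gnd_M(E)`.
The free variables are handled by `Π`-closedness of `M` for a ground term `α`: they can be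
moved to `α` one at a time without leaving `M`. For a new class each such move is justified
by the generating equation (initial classes), by congruence of the arguments (Deduction), or
by whichever merged class does not see the moved variable through its separating variables
(Merge); a variable seen by both is separating in the merged class.
-/

namespace NGCC

inductive Tm (F : Type) : Type
  | var : ℕ → Tm F
  | app : F → List (Tm F) → Tm F

instance {F : Type} : Inhabited (Tm F) := ⟨Tm.var 0⟩

namespace Tm
variable {F : Type}

def subst (σ : ℕ → Tm F) : Tm F → Tm F
  | var x => σ x
  | app f ts => app f (ts.attach.map fun t => t.1.subst σ)
  decreasing_by simp only [app.sizeOf_spec]; have h := List.sizeOf_lt_of_mem t.2; omega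

def varsList : Tm F → List ℕ
  | var x => [x]
  | app _ ts => (ts.attach.map fun t => t.1.varsList).flatten
  decreasing_by simp only [app.sizeOf_spec]; have h := List.sizeOf_lt_of_mem t.2; omega

def varsIn (t : Tm F) : Set ℕ := {x | x ∈ t.varsList}

def Ground (t : Tm F) : Prop := t.varsList = []

def size : Tm F → ℕ
  | var _ => 1
  | app _ ts => 1 + (ts.attach.map fun t => t.1.size).sum
  decreasing_by simp only [app.sizeOf_spec]; have h := List.sizeOf_lt_of_mem t.2; omega

def count (x : ℕ) : Tm F → ℕ
  | var y => if y = x then 1 else 0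
  | app _ ts => (ts.attach.map fun t => count x t.1).sum
  decreasing_by simp only [app.sizeOf_spec]; have h := List.sizeOf_lt_of_mem t.2; omega

def eval {α : Type} (I : F → List α → α) (v : ℕ → α) : Tm F → α
  | var x => v x
  | app f ts => I f (ts.attach.map fun t => t.1.eval I v)
  decreasing_by simp only [app.sizeOf_spec]; have h := List.sizeOf_lt_of_mem t.2; omega

end Tm


abbrev Subst (F : Type) := ℕ → Tm F

def Subst.dom {F : Type} (σ : Subst F) : Set ℕ := {x | σ x ≠ Tm.var x}

def Subst.comp {F : Type} (σ δ : Subst F) : Subst F := fun x => (σ x).subst δ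

structure CTerm (F : Type) where
  constr : Set (Tm F)
  term : Tm F

abbrev CClass (F : Type) := Set (CTerm F)

variable {F : Type}

/-- Application of a substitution to a constraint (set of atoms `u ∈ M`). -/
def substConstr (Γ : Set (Tm F)) (σ : Subst F) : Set (Tm F) := (fun u => u.subst σ) '' Γ

def CTerm.subst (ct : CTerm F) (σ : Subst F) : CTerm F :=
  ⟨substConstr ct.constr σ, ct.term.subst σ⟩

def substClass (A : CClass F) (σ : Subst F) : CClass F := (fun ct => ct.subst σ) '' A

/-- `Γσ` is true: every atom of `Γσ` belongs to `M`. -/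
def ConstrHolds (M : Set (Tm F)) (Γ : Set (Tm F)) (σ : Subst F) : Prop :=
  substConstr Γ σ ⊆ M

/-- Satisfiability of a constraint with respect to `M`. -/
def ConstrSat (M : Set (Tm F)) (Γ : Set (Tm F)) : Prop :=
  ∃ σ : Subst F, ConstrHolds M Γ σ

/-- `σ` is grounding for the class `A` (for all its constrained terms). -/
def GroundingForClass (σ : Subst F) (A : CClass F) : Prop :=
  ∀ ct ∈ A, (ct.term.subst σ).Ground ∧ ∀ u ∈ ct.constr, (u.subst σ).Ground

/-- Separating variables of a class. -/
def sepVars (A : CClass F) : Set ℕ := ⋂ ct ∈ A, (CTerm.term ct).varsIn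

/-- All variables of the terms of a class. -/
def termVars (A : CClass F) : Set ℕ := ⋃ ct ∈ A, (CTerm.term ct).varsIn

/-- Free variables of a class. -/
def freeVars (A : CClass F) : Set ℕ := termVars A \ sepVars A

/-- All variables occurring in a class (terms and constraints). -/
def varsAll (A : CClass F) : Set ℕ :=
  ⋃ ct ∈ A, ((CTerm.term ct).varsIn ∪ ⋃ u ∈ CTerm.constr ct, u.varsIn)

/-- `gnd'(A)`. -/
def gnd' (M : Set (Tm F)) (A : CClass F) : Set (CClass F) :=
  { B | ∃ σ : Subst F, Subst.dom σ = sepVars A ∧ (∀ x ∈ Subst.dom σ, (σ x).Ground) ∧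
      B = { ct' | ∃ ct ∈ A, ConstrSat M (substConstr (CTerm.constr ct) σ) ∧ ct' = ct.subst σ } }

/-- `gnd(A)`: sets of ground terms. -/
def gnd (M : Set (Tm F)) (A : CClass F) : Set (Set (Tm F)) :=
  { S | ∃ B ∈ gnd' M A,
      S = { t | ∃ σ : Subst F, GroundingForClass σ B ∧
              ∃ ct ∈ B, ConstrHolds M (CTerm.constr ct) σ ∧ t = (CTerm.term ct).subst σ } }

/-- The elements of `gnd(A)` regarded as classes of constrained ground terms. -/
def gndCl (M : Set (Tm F)) (A : CClass F) : Set (CClass F) :=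
  { S | ∃ B ∈ gnd' M A,
      S = { ct' | ∃ σ : Subst F, GroundingForClass σ B ∧
              ∃ ct ∈ B, ConstrHolds M (CTerm.constr ct) σ ∧ ct' = ct.subst σ } }

/-- `B` subsumes `A`. -/
def Subsumes (M : Set (Tm F)) (B A : CClass F) : Prop :=
  ∀ A' ∈ gnd M A, ∃ B' ∈ gnd M B, A' ⊆ B'

/-- `A` is `M`-constrained: the atom `sᵢ ∈ M` occurs in `Γᵢ` for each `Γᵢ ∥ sᵢ ∈ A`. -/
def MConstrained (A : CClass F) : Prop := ∀ ct ∈ A, CTerm.term ct ∈ CTerm.constr ct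

/-- `ρ` is a renaming of the free variables of `A` to fresh variables. -/
def IsNormRenaming (A : CClass F) (ρ : Subst F) : Prop :=
  (∀ x, ∃ y, ρ x = Tm.var y) ∧ (∀ x, x ∉ freeVars A → ρ x = Tm.var x) ∧
  (∀ x ∈ freeVars A, ∀ x' ∈ freeVars A, ρ x = ρ x' → x = x') ∧
  (∀ x ∈ freeVars A, ∀ y, ρ x = Tm.var y → y ∉ varsAll A)

/-- The normal class `norm(A)` for the renaming `ρ`. -/
def normC (A : CClass F) (ρ : Subst F) : CClass F :=
  { ct' | ∃ ct ∈ A, ct' = ⟨CTerm.constr ct ∪ substConstr (CTerm.constr ct) ρ, CTerm.term ct⟩ } ∪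
  { ct' | ∃ ct ∈ A, ((CTerm.term ct).varsIn ∩ freeVars A).Nonempty ∧
      ct' = ⟨CTerm.constr ct ∪ substConstr (CTerm.constr ct) ρ, (CTerm.term ct).subst ρ⟩ }

/-- `Aμ` for a grounding substitution `μ`: the set of ground terms
`{sμ | Γ ∥ s ∈ A and Γμ true}`. -/
def applyClass (M : Set (Tm F)) (A : CClass F) (μ : Subst F) : Set (Tm F) :=
  { t | ∃ ct ∈ A, ConstrHolds M (CTerm.constr ct) μ ∧ t = (CTerm.term ct).subst μ }

/-- Subterm relation. -/
inductive Subterm {F : Type} : Tm F → Tm F → Prop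
  | refl (t : Tm F) : Subterm t t
  | app {s t : Tm F} (f : F) (ts : List (Tm F)) : t ∈ ts → Subterm s t → Subterm s (Tm.app f ts)

/-- `s` occurs as a (sub)term in `Π`. -/
def OccursIn (s : Tm F) (P : Set (CClass F)) : Prop :=
  ∃ A ∈ P, ∃ ct ∈ A, Subterm s (CTerm.term ct) ∨ ∃ u ∈ CTerm.constr ct, Subterm s u

/-- `M` is `Π`-closed for the ground term `t`. -/
def PiClosed (M : Set (Tm F)) (P : Set (CClass F)) (t : Tm F) : Prop :=
  ∀ s, OccursIn s P → ∀ σ : Subst F, s.subst σ ∈ M →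
    ∀ δ : Subst F, (∀ x, σ x ≠ δ x → δ x = t) → s.subst δ ∈ M

/-- Semantic equational consequence: every model of the (implicitly universally
quantified) equations is a model of `s ≈ t`. -/
def Entails (Eqs : Set (Tm F × Tm F)) (s t : Tm F) : Prop :=
  ∀ (α : Type) (_ : Nonempty α) (I : F → List α → α) (v : ℕ → α),
    (∀ e ∈ Eqs, ∀ w : ℕ → α, Tm.eval I w e.1 = Tm.eval I w e.2) →
    Tm.eval I v s = Tm.eval I v t

/-- `gnd_M(E)`: ground instances of equations of `E` with all ground terms in `M`. -/
def gndM (M : Set (Tm F)) (E : Set (Tm F × Tm F)) : Set (Tm F × Tm F) :=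
  { e | ∃ p ∈ E, ∃ σ : Subst F,
      e = (Tm.subst σ p.1, Tm.subst σ p.2) ∧ Tm.subst σ p.1 ∈ M ∧ Tm.subst σ p.2 ∈ M }

def IsUnifier (μ : Subst F) (s t : Tm F) : Prop := s.subst μ = t.subst μ

def IsMGU (μ : Subst F) (s t : Tm F) : Prop :=
  IsUnifier μ s t ∧ ∀ τ : Subst F, IsUnifier τ s t → ∃ δ : Subst F, τ = Subst.comp μ δ

/-- Simultaneous most general unifier of the equations `s₁ = t₁` and `s₂ = t₂`. -/
def IsSimMGU (μ : Subst F) (s₁ t₁ s₂ t₂ : Tm F) : Prop :=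
  IsUnifier μ s₁ t₁ ∧ IsUnifier μ s₂ t₂ ∧
  ∀ τ : Subst F, IsUnifier τ s₁ t₁ → IsUnifier τ s₂ t₂ → ∃ δ : Subst F, τ = Subst.comp μ δ

/-- Conjoin a constraint to every constrained term of a class. -/
def addConstr (A : CClass F) (Γ : Set (Tm F)) : CClass F :=
  { ct' | ∃ ct ∈ A, ct' = ⟨CTerm.constr ct ∪ Γ, CTerm.term ct⟩ }

/-- The rules of the calculus CC(X). -/
inductive Step {F : Type} (M : Set (Tm F)) : Set (CClass F) → Set (CClass F) → Prop
  | merge (P : Set (CClass F)) (A B C' : CClass F) (ρA ρB μ : Subst F) (ct₁ ct₂ : CTerm F)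
      (hA : A ∈ P) (hB : B ∈ P)
      (hρA : IsNormRenaming A ρA) (hρB : IsNormRenaming B ρB)
      (h1 : ct₁ ∈ A) (h2 : ct₂ ∈ B)
      (hmgu : IsMGU μ ct₁.term ct₂.term)
      (hC' : C' = substClass (addConstr (normC A ρA) (ct₁.constr ∪ ct₂.constr) ∪
                               addConstr (normC B ρB) (ct₁.constr ∪ ct₂.constr)) μ)
      (hnsub : ∀ C ∈ P, ¬ Subsumes M C C') :
      Step M P (insert C' P)
  | deduction (P : Set (CClass F)) (A B C' : CClass F) (f : F)
      (ss ts ss' ts' : List (Tm F)) (Γ Δ : Set (Tm F)) (Γs Δs : List (Set (Tm F))) (μ : Subst F)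
      (hA : A ∈ P) (hB : B ∈ P)
      (h1 : (⟨Γ, Tm.app f ss⟩ : CTerm F) ∈ A)
      (h2 : (⟨Δ, Tm.app f ts⟩ : CTerm F) ∈ B)
      (hl1 : ss'.length = ss.length) (hl2 : ts'.length = ss.length)
      (hl3 : ts.length = ss.length) (hl4 : Γs.length = ss.length) (hl5 : Δs.length = ss.length)
      (hside : ∀ i < ss.length, ∃ D ∈ P, ∃ ρ : Subst F, IsNormRenaming D ρ ∧
          (⟨Γs[i]!, ss'[i]!⟩ : CTerm F) ∈ normC D ρ ∧ (⟨Δs[i]!, ts'[i]!⟩ : CTerm F) ∈ normC D ρ)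
      (hmgu : IsSimMGU μ (Tm.app f ss') (Tm.app f ss) (Tm.app f ts') (Tm.app f ts))
      (hC' : C' = substClass
          ({⟨Γ ∪ Δ ∪ ⋃₀ {G | G ∈ Γs} ∪ ⋃₀ {G | G ∈ Δs}, Tm.app f ss'⟩,
            ⟨Γ ∪ Δ ∪ ⋃₀ {G | G ∈ Γs} ∪ ⋃₀ {G | G ∈ Δs}, Tm.app f ts'⟩} : CClass F) μ)
      (hnsub : ∀ C ∈ P, ¬ Subsumes M C C') :
      Step M P (insert C' P)
  | subsump (P : Set (CClass F)) (A B : CClass F)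
      (hA : A ∈ P) (hB : B ∈ P) (hne : A ≠ B) (hsub : Subsumes M B A) :
      Step M P (P \ {A})

/-- The single-term class `{f(x₁,…,x_k) ∈ M ∥ f(x₁,…,x_k)}`. -/
def singleTermClass (ar : F → ℕ) (f : F) : CClass F :=
  {⟨{Tm.app f ((List.range (ar f)).map Tm.var)}, Tm.app f ((List.range (ar f)).map Tm.var)⟩}

/-- The initial state `Π₀` of CC(X) for the equations `E`. -/
def initState (ar : F → ℕ) (E : Set (Tm F × Tm F)) : Set (CClass F) :=
  { A | ∃ p ∈ E, A = ({⟨{p.1, p.2}, p.1⟩, ⟨{p.1, p.2}, p.2⟩} : CClass F) } ∪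
  { A | ∃ f : F, A = singleTermClass ar f }

/-- `B` subsumes `A` by matching. -/
def SubsumesByMatching (M : Set (Tm F)) (B A : CClass F) : Prop :=
  ∃ σ : Subst F, Subst.dom σ ⊆ sepVars B ∧ (∀ x ∈ sepVars B, (σ x).varsIn ⊆ varsAll A) ∧
    ∀ ct ∈ A, ∃ τ : Subst F, Subst.dom τ ⊆ freeVars B ∧
      (∀ y ∈ freeVars B, (τ y).varsIn ⊆ varsAll A) ∧
      ∃ ct' ∈ B, CTerm.term ct = ((CTerm.term ct').subst σ).subst τ ∧
        ∀ δ : Subst F, ConstrHolds M (CTerm.constr ct) δ →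
          ∃ δ' : Subst F,
            ConstrHolds M (substConstr (substConstr (substConstr (CTerm.constr ct') σ) τ) δ) δ'

/-- `M` determined by the symbol-count ordering and a bound `β`. -/
def Mle (β : Tm F) : Set (Tm F) := { t | t.Ground ∧ t.size ≤ β.size }

def varsFinset (t : Tm F) : Finset ℕ := t.varsList.toFinset

/-- Truth of the LIA abstraction `lic(t ⪯ β)` under an integer assignment `v`. -/
def licHolds (t β : Tm F) (v : ℕ → ℕ) : Prop :=
  (∀ x ∈ varsFinset t, 1 ≤ v x) ∧
  (∑ x ∈ varsFinset t, (t.count x : ℤ) * (v x : ℤ)) ≤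
    (β.size : ℤ) - ((t.size : ℤ) - ∑ x ∈ varsFinset t, (t.count x : ℤ))

namespace Tm

theorem ind {P : Tm F → Prop} (hv : ∀ x, P (var x))
    (ha : ∀ (f : F) (ts : List (Tm F)), (∀ t ∈ ts, P t) → P (app f ts)) : ∀ t, P t
  | var x => hv x
  | app f ts => ha f ts (fun t _ => ind hv ha t)
  decreasing_by simp only [app.sizeOf_spec]; have h := List.sizeOf_lt_of_mem ‹t ∈ ts›; omega

@[simp]
theorem subst_var (σ : Subst F) (x : ℕ) : (var x).subst σ = σ x := by
  simp [Tm.subst]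

theorem subst_app (σ : Subst F) (f : F) (ts : List (Tm F)) :
    (app f ts).subst σ = app f (ts.map (·.subst σ)) := by
  rw [Tm.subst]; simp

@[simp]
theorem varsList_var (x : ℕ) : (var x : Tm F).varsList = [x] := by simp [Tm.varsList]

theorem varsList_app (f : F) (ts : List (Tm F)) :
    (app f ts).varsList = (ts.map varsList).flatten := by
  rw [Tm.varsList]; simp

theorem eval_app {α : Type} (I : F → List α → α) (v : ℕ → α) (f : F) (ts : List (Tm F)) :
    (app f ts).eval I v = I f (ts.map (·.eval I v)) := by
  rw [Tm.eval]; simp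

theorem subst_congr {σ δ : Subst F} (t : Tm F) (h : ∀ x ∈ t.varsList, σ x = δ x) :
    t.subst σ = t.subst δ := by
  induction t using ind with
  | hv x => simpa using h x
  | ha f ts ih =>
      rw [subst_app, subst_app]
      refine congrArg _ (List.map_congr_left fun t ht => ih t ht fun x hx => h x ?_)
      rw [varsList_app]
      exact List.mem_flatten.2 ⟨t.varsList, List.mem_map_of_mem ht, hx⟩

theorem subst_id (t : Tm F) : t.subst var = t := by
  induction t using ind with
  | hv x => rw [subst_var]
  | ha f ts ih =>
      rw [subst_app]
      exact congrArg _ ((List.map_congr_left ih).trans (List.map_id ts))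

theorem Ground.subst_eq {t : Tm F} (h : t.Ground) (σ : Subst F) : t.subst σ = t := by
  have hvars : t.varsList = [] := h
  rw [subst_congr t (δ := var) (by simp [hvars]), subst_id]

theorem subst_subst (t : Tm F) (σ δ : Subst F) :
    (t.subst σ).subst δ = t.subst (Subst.comp σ δ) := by
  induction t using ind with
  | hv x => rw [subst_var, subst_var]; rfl
  | ha f ts ih =>
      rw [subst_app, subst_app, subst_app, List.map_map]
      exact congrArg _ (List.map_congr_left ih)

theorem subst_update_of_notMem {x : ℕ} {t : Tm F} (hx : x ∉ t.varsList) (τ : Subst F)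
    (s : Tm F) : t.subst (Function.update τ x s) = t.subst τ :=
  subst_congr t fun _ hy => Function.update_of_ne (ne_of_mem_of_not_mem hy hx) _ _

theorem mem_varsList_subst {x : ℕ} {t : Tm F} {σ : Subst F} :
    x ∈ (t.subst σ).varsList ↔ ∃ y ∈ t.varsList, x ∈ (σ y).varsList := by
  induction t using ind with
  | hv y => simp
  | ha f ts ih =>
      simp only [subst_app, varsList_app, List.map_map, List.mem_flatten, List.mem_map,
        Function.comp_apply]
      constructor
      · rintro ⟨_, ⟨t, ht, rfl⟩, hx⟩
        obtain ⟨y, hy, hxy⟩ := (ih t ht).1 hx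
        exact ⟨y, ⟨_, ⟨t, ht, rfl⟩, hy⟩, hxy⟩
      · rintro ⟨y, ⟨_, ⟨t, ht, rfl⟩, hy⟩, hxy⟩
        exact ⟨_, ⟨t, ht, rfl⟩, (ih t ht).2 ⟨y, hy, hxy⟩⟩

end Tm

namespace Entails

variable {Eqs : Set (Tm F × Tm F)} {s t u : Tm F}

protected theorem refl (t : Tm F) : Entails Eqs t t :=
  fun _ _ _ _ _ => rfl

protected theorem symm (h : Entails Eqs s t) : Entails Eqs t s :=
  fun α hα I v hI => (h α hα I v hI).symm

protected theorem trans (h₁ : Entails Eqs s t) (h₂ : Entails Eqs t u) : Entails Eqs s u :=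
  fun α hα I v hI => (h₁ α hα I v hI).trans (h₂ α hα I v hI)

instance : Trans (Entails Eqs) (Entails Eqs) (Entails Eqs) := ⟨Entails.trans⟩

theorem of_mem (h : (s, t) ∈ Eqs) : Entails Eqs s t := fun _ _ _ v hI => hI (s, t) h v

theorem app (f : F) {ss ts : List (Tm F)} (h : List.Forall₂ (Entails Eqs) ss ts) :
    Entails Eqs (.app f ss) (.app f ts) := by
  intro α hα I v hI
  rw [Tm.eval_app, Tm.eval_app]
  congr 1
  induction h with
  | nil => rfl
  | cons hst _ ih => rw [List.map_cons, List.map_cons, hst α hα I v hI, ih]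

end Entails

section Constraints

variable {M Γ Δ : Set (Tm F)} {σ τ μ : Subst F}

theorem constrHolds_iff : ConstrHolds M Γ σ ↔ ∀ u ∈ Γ, u.subst σ ∈ M :=
  Set.image_subset_iff

theorem ConstrHolds.mono (h : ConstrHolds M Δ σ) (hΓ : Γ ⊆ Δ) : ConstrHolds M Γ σ :=
  (Set.image_mono hΓ).trans h

theorem constrHolds_union :
    ConstrHolds M (Γ ∪ Δ) σ ↔ ConstrHolds M Γ σ ∧ ConstrHolds M Δ σ := by
  rw [ConstrHolds, substConstr, Set.image_union, Set.union_subset_iff]; rfl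

theorem constrHolds_substConstr :
    ConstrHolds M (substConstr Γ μ) τ ↔ ConstrHolds M Γ (Subst.comp μ τ) := by
  simp only [ConstrHolds, substConstr, Set.image_image, Tm.subst_subst]

theorem constrHolds_of_constrSat (hg : ∀ u ∈ Γ, (u.subst σ).Ground)
    (h : ConstrSat M (substConstr Γ σ)) : ConstrHolds M Γ σ := by
  obtain ⟨δ, hδ⟩ := h
  refine constrHolds_iff.2 fun u hu => ?_
  rw [← (hg u hu).subst_eq δ]
  exact constrHolds_iff.1 hδ _ ⟨u, hu, rfl⟩

theorem occursIn_of_mem_constr {P : Set (CClass F)} {A : CClass F} {ct : CTerm F} {u : Tm F}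
    (hA : A ∈ P) (hct : ct ∈ A) (hu : u ∈ ct.constr) : OccursIn u P :=
  ⟨A, hA, ct, hct, Or.inr ⟨u, hu, Subterm.refl u⟩⟩

theorem PiClosed.constrHolds_update {P : Set (CClass F)} {α : Tm F} (hP : PiClosed M P α)
    (hΓ : ∀ u ∈ Γ, OccursIn u P) (h : ConstrHolds M Γ τ) (x : ℕ) :
    ConstrHolds M Γ (Function.update τ x α) := by
  refine constrHolds_iff.2 fun u hu => hP u (hΓ u hu) τ (constrHolds_iff.1 h u hu) _ ?_
  intro y hy
  by_cases hyx : y = x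
  · subst hyx; simp
  · simp [hyx] at hy

end Constraints

/-- Instantiating the two terms by different substitutions, which only agree on the separating
variables, is what makes the invariant stable under the renaming of free variables in `normC`. -/
def SoundClass (M : Set (Tm F)) (Eqs : Set (Tm F × Tm F)) (A : CClass F) : Prop :=
  ∀ ct₁ ∈ A, ∀ ct₂ ∈ A, ∀ σ₁ σ₂ : Subst F, Set.EqOn σ₁ σ₂ (sepVars A) →
    ConstrHolds M ct₁.constr σ₁ → ConstrHolds M ct₂.constr σ₂ →
    Entails Eqs (ct₁.term.subst σ₁) (ct₂.term.subst σ₂)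

section Chains

variable {Eqs : Set (Tm F × Tm F)} {Q : Subst F → Prop} {α : Tm F}

/-- Moving the variables of `t` outside `S` one by one to `α` takes `σ₁` and `σ₂` to
substitutions that agree on `t`. -/
theorem entails_of_eqOn {S : Set ℕ} (t : Tm F)
    (hQ : ∀ τ x, Q τ → Q (Function.update τ x α))
    (hstep : ∀ τ, Q τ → ∀ x ∉ S, Entails Eqs (t.subst τ) (t.subst (Function.update τ x α)))
    {σ₁ σ₂ : Subst F} (hS : Set.EqOn σ₁ σ₂ S) (h₁ : Q σ₁) (h₂ : Q σ₂) :
    Entails Eqs (t.subst σ₁) (t.subst σ₂) := by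
  classical
  have hchain : ∀ xs : List ℕ, (∀ x ∈ xs, x ∉ S) → ∀ σ₁ σ₂, Q σ₁ → Q σ₂ →
      (∀ y ∈ t.varsList, y ∉ xs → σ₁ y = σ₂ y) → Entails Eqs (t.subst σ₁) (t.subst σ₂) := by
    intro xs
    induction xs with
    | nil =>
        intro _ σ₁ σ₂ _ _ heq
        rw [Tm.subst_congr t fun y hy => heq y hy List.not_mem_nil]
        exact .refl _
    | cons x xs ih =>
        intro hxs σ₁ σ₂ h₁ h₂ heq
        have hx := hxs x List.mem_cons_self
        have hupd : Entails Eqs (t.subst (Function.update σ₁ x α))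
            (t.subst (Function.update σ₂ x α)) := by
          refine ih (fun y hy => hxs y (List.mem_cons_of_mem x hy)) _ _ (hQ _ _ h₁) (hQ _ _ h₂)
            fun y hy hyxs => ?_
          by_cases hyx : y = x
          · simp [hyx]
          · simp [hyx, heq y hy (by simp [hyx, hyxs])]
        exact (hstep σ₁ h₁ x hx).trans (hupd.trans (hstep σ₂ h₂ x hx).symm)
  refine hchain (t.varsList.filter (· ∉ S)) (fun x hx => by simpa using List.of_mem_filter hx)
    σ₁ σ₂ h₁ h₂ fun y hy hyxs => hS ?_
  by_contra hyS
  exact hyxs (List.mem_filter.2 ⟨hy, by simpa using hyS⟩)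

theorem entails_update_of_pointwise {u₁ u₂ : Tm F}
    (hQ : ∀ τ x, Q τ → Q (Function.update τ x α))
    (hpt : ∀ τ, Q τ → Entails Eqs (u₁.subst τ) (u₂.subst τ))
    {τ : Subst F} (hτ : Q τ) {x : ℕ} (hx : x ∉ u₁.varsIn ∩ u₂.varsIn) :
    Entails Eqs (u₁.subst τ) (u₁.subst (Function.update τ x α)) := by
  by_cases h₁ : x ∈ u₁.varsList
  · have h₂ : x ∉ u₂.varsList := fun h₂ => hx ⟨h₁, h₂⟩
    calc Entails Eqs (u₁.subst τ) (u₂.subst τ) := hpt τ hτ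
      _ = u₂.subst (Function.update τ x α) := (Tm.subst_update_of_notMem h₂ τ α).symm
      Entails Eqs _ (u₁.subst (Function.update τ x α)) := (hpt _ (hQ τ x hτ)).symm
  · rw [Tm.subst_update_of_notMem h₁]
    exact .refl _

end Chains

section Soundness

variable {M : Set (Tm F)} {Eqs : Set (Tm F × Tm F)} {P : Set (CClass F)} {α : Tm F}

theorem sepVars_pair (Γ Δ : Set (Tm F)) (u₁ u₂ : Tm F) :
    sepVars ({⟨Γ, u₁⟩, ⟨Δ, u₂⟩} : CClass F) = u₁.varsIn ∩ u₂.varsIn := by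
  simp [sepVars]

theorem soundClass_pair (hP : PiClosed M P α) {Γ : Set (Tm F)} (hΓ : ∀ u ∈ Γ, OccursIn u P)
    {u₁ u₂ : Tm F} (hpt : ∀ τ, ConstrHolds M Γ τ → Entails Eqs (u₁.subst τ) (u₂.subst τ)) :
    SoundClass M Eqs {⟨Γ, u₁⟩, ⟨Γ, u₂⟩} := by
  have hQ : ∀ τ x, ConstrHolds M Γ τ → ConstrHolds M Γ (Function.update τ x α) :=
    fun τ x h => hP.constrHolds_update hΓ h x
  have hcross : ∀ {v w : Tm F}, (∀ τ, ConstrHolds M Γ τ → Entails Eqs (v.subst τ) (w.subst τ)) →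
      ∀ {σ₁ σ₂}, Set.EqOn σ₁ σ₂ (v.varsIn ∩ w.varsIn) → ConstrHolds M Γ σ₁ →
        ConstrHolds M Γ σ₂ → Entails Eqs (v.subst σ₁) (w.subst σ₂) :=
    fun hvw _ _ hS h₁ h₂ =>
      (entails_of_eqOn _ hQ (fun _ hτ _ hx => entails_update_of_pointwise hQ hvw hτ hx) hS h₁
        h₂).trans (hvw _ h₂)
  have hpt' : ∀ τ, ConstrHolds M Γ τ → Entails Eqs (u₂.subst τ) (u₁.subst τ) :=
    fun τ h => (hpt τ h).symm
  rintro _ (rfl | rfl) _ (rfl | rfl) σ₁ σ₂ hS h₁ h₂ <;> rw [sepVars_pair] at hS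
  · exact (hcross hpt hS h₁ h₂).trans (hpt' σ₂ h₂)
  · exact hcross hpt hS h₁ h₂
  · exact hcross hpt' (Set.inter_comm _ _ ▸ hS) h₁ h₂
  · exact (hcross hpt' (Set.inter_comm _ _ ▸ hS) h₁ h₂).trans (hpt σ₂ h₂)

theorem soundClass_initState {ar : F → ℕ} {E : Set (Tm F × Tm F)}
    (hP : PiClosed M (initState ar E) α) : ∀ A ∈ initState ar E, SoundClass M (gndM M E) A := by
  rintro A (⟨p, hp, rfl⟩ | ⟨f, rfl⟩)
  · refine soundClass_pair hP (fun u hu => occursIn_of_mem_constr (Or.inl ⟨p, hp, rfl⟩)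
      (Or.inl rfl) hu) fun τ hτ => Entails.of_mem ⟨p, hp, τ, rfl, ?_, ?_⟩
    · exact constrHolds_iff.1 hτ _ (Or.inl rfl)
    · exact constrHolds_iff.1 hτ _ (Or.inr rfl)
  · rw [singleTermClass, ← Set.pair_eq_singleton]
    exact soundClass_pair hP (fun u hu => occursIn_of_mem_constr (Or.inr ⟨f, rfl⟩) rfl hu)
      fun τ _ => .refl _

theorem IsNormRenaming.apply_of_mem_sepVars {A : CClass F} {ρ : Subst F}
    (hρ : IsNormRenaming A ρ) {y : ℕ} (hy : y ∈ sepVars A) : ρ y = Tm.var y :=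
  hρ.2.1 y fun h => h.2 hy

theorem exists_of_mem_normC {A : CClass F} {ρ σ : Subst F} (hρ : IsNormRenaming A ρ)
    {ct : CTerm F} (hct : ct ∈ normC A ρ) (hσ : ConstrHolds M ct.constr σ) :
    ∃ c ∈ A, ∃ σ' : Subst F, Set.EqOn σ' σ (sepVars A) ∧ ConstrHolds M c.constr σ' ∧
      ct.term.subst σ = c.term.subst σ' := by
  rcases hct with ⟨c, hc, rfl⟩ | ⟨c, hc, -, rfl⟩ <;> obtain ⟨hσ, hσρ⟩ := constrHolds_union.1 hσ
  · exact ⟨c, hc, σ, Set.eqOn_refl _ _, hσ, rfl⟩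
  · refine ⟨c, hc, Subst.comp ρ σ, fun y hy => ?_, constrHolds_substConstr.1 hσρ,
      Tm.subst_subst _ _ _⟩
    simp [Subst.comp, hρ.apply_of_mem_sepVars hy]

theorem sepVars_subset_varsIn_of_mem_normC {A : CClass F} {ρ : Subst F}
    (hρ : IsNormRenaming A ρ) {ct : CTerm F} (hct : ct ∈ normC A ρ) :
    sepVars A ⊆ ct.term.varsIn := by
  intro y hy
  rcases hct with ⟨c, hc, rfl⟩ | ⟨c, hc, -, rfl⟩
  · exact Set.mem_iInter₂.1 hy c hc
  · exact Tm.mem_varsList_subst.2 ⟨y, Set.mem_iInter₂.1 hy c hc,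
      by simp [hρ.apply_of_mem_sepVars hy]⟩

theorem SoundClass.entails_of_mem_normC {A : CClass F} {ρ : Subst F} (hA : SoundClass M Eqs A)
    (hρ : IsNormRenaming A ρ) {c₁ c₂ : CTerm F} (h₁ : c₁ ∈ normC A ρ) (h₂ : c₂ ∈ normC A ρ)
    {σ₁ σ₂ : Subst F} (hS : Set.EqOn σ₁ σ₂ (sepVars A)) (hc₁ : ConstrHolds M c₁.constr σ₁)
    (hc₂ : ConstrHolds M c₂.constr σ₂) :
    Entails Eqs (c₁.term.subst σ₁) (c₂.term.subst σ₂) := by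
  obtain ⟨d₁, hd₁, τ₁, hτ₁, hd₁c, he₁⟩ := exists_of_mem_normC hρ h₁ hc₁
  obtain ⟨d₂, hd₂, τ₂, hτ₂, hd₂c, he₂⟩ := exists_of_mem_normC hρ h₂ hc₂
  rw [he₁, he₂]
  exact hA d₁ hd₁ d₂ hd₂ τ₁ τ₂ (hτ₁.trans (hS.trans hτ₂.symm)) hd₁c hd₂c

theorem exists_of_mem_substClass_addConstr {N : CClass F} {K : Set (Tm F)} {μ : Subst F}
    {e : CTerm F} (he : e ∈ substClass (addConstr N K) μ) :
    ∃ c ∈ N, e = ⟨substConstr (c.constr ∪ K) μ, c.term.subst μ⟩ := by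
  obtain ⟨_, ⟨c, hc, rfl⟩, rfl⟩ := he
  exact ⟨c, hc, rfl⟩

section Merge

variable {X : CClass F} {ρ μ : Subst F} {K : Set (Tm F)} {ct e : CTerm F}

theorem SoundClass.entails_of_mem_merge (hX : SoundClass M Eqs X) (hρ : IsNormRenaming X ρ)
    (hct : ct ∈ X) (hK : ct.constr ⊆ K) (he : e ∈ substClass (addConstr (normC X ρ) K) μ)
    {τ : Subst F} (hτ : ConstrHolds M e.constr τ) :
    Entails Eqs (e.term.subst τ) ((ct.term.subst μ).subst τ) ∧
      ConstrHolds M (substConstr K μ) τ := by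
  obtain ⟨c, hc, rfl⟩ := exists_of_mem_substClass_addConstr he
  obtain ⟨hcτ, hKτ⟩ := constrHolds_union.1 (constrHolds_substConstr.1 hτ)
  obtain ⟨d, hd, σ', hσ', hdσ', hcd⟩ := exists_of_mem_normC hρ hc hcτ
  refine ⟨?_, constrHolds_substConstr.2 hKτ⟩
  rw [Tm.subst_subst, Tm.subst_subst, hcd]
  exact hX d hd ct hct σ' _ hσ' hdσ' (hKτ.mono hK)

theorem SoundClass.entails_subst_update (hX : SoundClass M Eqs X) (hct : ct ∈ X)
    (hK : ct.constr ⊆ K) {x : ℕ} (hx : ∀ y ∈ sepVars X, x ∉ (μ y).varsList) {τ : Subst F}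
    (hτ : ConstrHolds M (substConstr K μ) τ)
    (hτx : ConstrHolds M (substConstr K μ) (Function.update τ x α)) :
    Entails Eqs ((ct.term.subst μ).subst τ) ((ct.term.subst μ).subst (Function.update τ x α)) := by
  rw [Tm.subst_subst, Tm.subst_subst]
  exact hX ct hct ct hct _ _ (fun y hy => (Tm.subst_update_of_notMem (hx y hy) τ α).symm)
    ((constrHolds_substConstr.1 hτ).mono hK) ((constrHolds_substConstr.1 hτx).mono hK)

theorem mem_varsIn_of_mem_substClass_addConstr_normC (hρ : IsNormRenaming X ρ) {y x : ℕ}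
    (hy : y ∈ sepVars X) (hxy : x ∈ (μ y).varsList)
    (he : e ∈ substClass (addConstr (normC X ρ) K) μ) : x ∈ e.term.varsIn := by
  obtain ⟨c, hc, rfl⟩ := exists_of_mem_substClass_addConstr he
  exact Tm.mem_varsList_subst.2 ⟨y, sepVars_subset_varsIn_of_mem_normC hρ hc hy, hxy⟩

theorem mem_sepVars_merge {A B : CClass F} {ρA ρB : Subst F} (hρA : IsNormRenaming A ρA)
    (hρB : IsNormRenaming B ρB) {x y z : ℕ} (hy : y ∈ sepVars A) (hxy : x ∈ (μ y).varsList)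
    (hz : z ∈ sepVars B) (hxz : x ∈ (μ z).varsList) :
    x ∈ sepVars (substClass (addConstr (normC A ρA) K) μ ∪
      substClass (addConstr (normC B ρB) K) μ) :=
  Set.mem_iInter₂.2 fun _ he => he.elim (mem_varsIn_of_mem_substClass_addConstr_normC hρA hy hxy)
    (mem_varsIn_of_mem_substClass_addConstr_normC hρB hz hxz)

end Merge

theorem soundClass_merge (hP : PiClosed M P α) {A B : CClass F} {ρA ρB μ : Subst F}
    {ct₁ ct₂ : CTerm F} (hA : SoundClass M Eqs A) (hB : SoundClass M Eqs B)
    (hρA : IsNormRenaming A ρA) (hρB : IsNormRenaming B ρB) (h₁ : ct₁ ∈ A) (h₂ : ct₂ ∈ B)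
    (hμ : IsUnifier μ ct₁.term ct₂.term)
    (hC : substClass (addConstr (normC A ρA) (ct₁.constr ∪ ct₂.constr) ∪
      addConstr (normC B ρB) (ct₁.constr ∪ ct₂.constr)) μ ∈ P) :
    SoundClass M Eqs (substClass (addConstr (normC A ρA) (ct₁.constr ∪ ct₂.constr) ∪
      addConstr (normC B ρB) (ct₁.constr ∪ ct₂.constr)) μ) := by
  set K := ct₁.constr ∪ ct₂.constr
  set t := ct₁.term.subst μ
  have ht : t = ct₂.term.subst μ := hμ
  rw [substClass, Set.image_union] at hC ⊢
  set CA := substClass (addConstr (normC A ρA) K) μ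
  set CB := substClass (addConstr (normC B ρB) K) μ
  have hKP : ∀ u ∈ substConstr K μ, OccursIn u P := fun u hu =>
    occursIn_of_mem_constr hC (Or.inl ⟨_, ⟨_, Or.inl ⟨ct₁, h₁, rfl⟩, rfl⟩, rfl⟩)
      (Set.image_mono Set.subset_union_right hu)
  have hQ : ∀ τ x, ConstrHolds M (substConstr K μ) τ →
      ConstrHolds M (substConstr K μ) (Function.update τ x α) :=
    fun τ x h => hP.constrHolds_update hKP h x
  have hpivot : ∀ e ∈ CA ∪ CB, ∀ τ, ConstrHolds M e.constr τ →
      Entails Eqs (e.term.subst τ) (t.subst τ) ∧ ConstrHolds M (substConstr K μ) τ := by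
    rintro e (he | he) τ hτ
    · exact hA.entails_of_mem_merge hρA h₁ Set.subset_union_left he hτ
    · exact ht ▸ hB.entails_of_mem_merge hρB h₂ Set.subset_union_right he hτ
  have hstep : ∀ τ, ConstrHolds M (substConstr K μ) τ → ∀ x ∉ sepVars (CA ∪ CB),
      Entails Eqs (t.subst τ) (t.subst (Function.update τ x α)) := by
    intro τ hτ x hx
    by_cases hxA : ∀ y ∈ sepVars A, x ∉ (μ y).varsList
    · exact hA.entails_subst_update h₁ Set.subset_union_left hxA hτ (hQ τ x hτ)
    obtain ⟨y, hy, hxy⟩ := not_forall₂.1 hxA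
    rw [ht]
    exact hB.entails_subst_update h₂ Set.subset_union_right
      (fun z hz hxz => hx (mem_sepVars_merge hρA hρB hy (not_not.1 hxy) hz hxz)) hτ (hQ τ x hτ)
  intro e₁ he₁ e₂ he₂ τ₁ τ₂ hS hτ₁ hτ₂
  obtain ⟨hE₁, hQ₁⟩ := hpivot e₁ he₁ τ₁ hτ₁
  obtain ⟨hE₂, hQ₂⟩ := hpivot e₂ he₂ τ₂ hτ₂
  exact hE₁.trans ((entails_of_eqOn t hQ hstep hS hQ₁ hQ₂).trans hE₂.symm)

theorem soundClass_deduction (hP : PiClosed M P α) {f : F} {ss ts : List (Tm F)}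
    {Θ : Set (Tm F)} {μ : Subst F}
    (hargs : ∀ τ, ConstrHolds M Θ τ →
      List.Forall₂ (fun s t => Entails Eqs (s.subst τ) (t.subst τ)) ss ts)
    (hC : substClass {⟨Θ, .app f ss⟩, ⟨Θ, .app f ts⟩} μ ∈ P) :
    SoundClass M Eqs (substClass {⟨Θ, .app f ss⟩, ⟨Θ, .app f ts⟩} μ) := by
  rw [substClass, Set.image_pair] at hC ⊢
  refine soundClass_pair hP (fun u hu => occursIn_of_mem_constr hC (Or.inl rfl) hu)
    fun τ hτ => ?_
  simp only [Tm.subst_app, List.map_map]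
  exact Entails.app f (by simpa [Tm.subst_subst] using hargs _ (constrHolds_substConstr.1 hτ))

theorem forall₂_entails_of_mem_normC {ss ts : List (Tm F)} {Γs Δs : List (Set (Tm F))}
    {Θ : Set (Tm F)} (hts : ts.length = ss.length) (hΓs : Γs.length = ss.length)
    (hΔs : Δs.length = ss.length) (hΓΘ : ∀ G ∈ Γs, G ⊆ Θ) (hΔΘ : ∀ G ∈ Δs, G ⊆ Θ)
    (hside : ∀ i < ss.length, ∃ D ρ, SoundClass M Eqs D ∧ IsNormRenaming D ρ ∧
      (⟨Γs[i]!, ss[i]!⟩ : CTerm F) ∈ normC D ρ ∧ (⟨Δs[i]!, ts[i]!⟩ : CTerm F) ∈ normC D ρ)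
    {τ : Subst F} (hτ : ConstrHolds M Θ τ) :
    List.Forall₂ (fun s t => Entails Eqs (s.subst τ) (t.subst τ)) ss ts := by
  refine List.forall₂_iff_get.2 ⟨hts.symm, fun i h₁ h₂ => ?_⟩
  obtain ⟨D, ρ, hD, hρ, hs, ht⟩ := hside i h₁
  simp only [List.get_eq_getElem]
  rw [getElem!_pos ss i h₁] at hs
  rw [getElem!_pos ts i h₂] at ht
  refine hD.entails_of_mem_normC hρ hs ht (Set.eqOn_refl _ _) (hτ.mono (hΓΘ _ ?_))
    (hτ.mono (hΔΘ _ ?_))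
  · rw [getElem!_pos Γs i (hΓs ▸ h₁)]; exact List.getElem_mem _
  · rw [getElem!_pos Δs i (hΔs ▸ h₁)]; exact List.getElem_mem _

theorem soundClass_of_step {P' : Set (CClass F)} (hstep : Step M P P')
    (hP : ∀ A ∈ P, SoundClass M Eqs A) (hP' : PiClosed M P' α) :
    ∀ A ∈ P', SoundClass M Eqs A := by
  cases hstep with
  | merge A B C ρA ρB μ ct₁ ct₂ hA hB hρA hρB h₁ h₂ hμ hC =>
      rintro _ (rfl | hA')
      · exact hC ▸ soundClass_merge hP' (hP A hA) (hP B hB) hρA hρB h₁ h₂ hμ.1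
          (hC ▸ Set.mem_insert _ _)
      · exact hP _ hA'
  | deduction A B C f ss ts ss' ts' Γ Δ Γs Δs μ _ _ _ _ hss' hts' _ hΓs hΔs hside _ hC =>
      rintro _ (rfl | hA')
      · refine hC ▸ soundClass_deduction hP' (fun τ hτ => forall₂_entails_of_mem_normC
          (hts'.trans hss'.symm) (hΓs.trans hss'.symm) (hΔs.trans hss'.symm)
          (fun G hG => ?_) (fun G hG => ?_) (fun i hi => ?_) hτ) (hC ▸ Set.mem_insert _ _)
        · exact fun u hu => Or.inl (Or.inr ⟨G, hG, hu⟩)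
        · exact fun u hu => Or.inr ⟨G, hG, hu⟩
        · obtain ⟨D, hD, ρ, hρ, hs, ht⟩ := hside i (hss' ▸ hi)
          exact ⟨D, ρ, hP D hD, hρ, hs, ht⟩
      · exact hP _ hA'
  | subsump A B _ _ _ _ => exact fun A hA => hP A hA.1

end Soundness

theorem ccx_sound_general {F : Type} (ar : F → ℕ)
    (M : Set (Tm F))
    (E : Set (Tm F × Tm F))
    (hclosed : ∀ P', Relation.ReflTransGen (Step M) (initState ar E) P' →
        ∃ α ∈ M, PiClosed M P' α) :
    ∀ P', Relation.ReflTransGen (Step M) (initState ar E) P' →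
      ∀ A ∈ P', ∀ ρ : Subst F, IsNormRenaming A ρ →
        ∀ ct₁ ∈ normC A ρ, ∀ ct₂ ∈ normC A ρ, ∀ σ : Subst F,
          ((CTerm.term ct₁).subst σ).Ground → ((CTerm.term ct₂).subst σ).Ground →
          (∀ u ∈ CTerm.constr ct₁, (u.subst σ).Ground) →
          (∀ u ∈ CTerm.constr ct₂, (u.subst σ).Ground) →
          ConstrSat M (substConstr (CTerm.constr ct₁) σ) →
          ConstrSat M (substConstr (CTerm.constr ct₂) σ) →
          Entails (gndM M E) ((CTerm.term ct₁).subst σ) ((CTerm.term ct₂).subst σ) := by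
  have hsound : ∀ P', Relation.ReflTransGen (Step M) (initState ar E) P' →
      ∀ A ∈ P', SoundClass M (gndM M E) A := by
    intro P' hrun
    induction hrun with
    | refl =>
        obtain ⟨α, -, hP⟩ := hclosed _ .refl
        exact soundClass_initState hP
    | tail hrun hstep ih =>
        obtain ⟨α, -, hP⟩ := hclosed _ (hrun.tail hstep)
        exact soundClass_of_step hstep ih hP
  intro P' hrun A hA ρ hρ ct₁ h₁ ct₂ h₂ σ _ _ hg₁ hg₂ hsat₁ hsat₂
  exact (hsound P' hrun A hA).entails_of_mem_normC hρ h₁ h₂ (Set.eqOn_refl _ _)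
    (constrHolds_of_constrSat hg₁ hsat₁) (constrHolds_of_constrSat hg₂ hsat₂)

/-- Soundness of CC(X). -/
theorem ccx_sound {F : Type} [Fintype F] [Nonempty F] (ar : F → ℕ)
    (M : Set (Tm F)) (hMfin : M.Finite) (hMg : ∀ t ∈ M, t.Ground)
    (E : Set (Tm F × Tm F)) (hEfin : E.Finite)
    (hEg : ∀ p ∈ E, ∃ σ : Subst F, Tm.subst σ p.1 ∈ M ∧ Tm.subst σ p.2 ∈ M)
    (hclosed : ∀ P', Relation.ReflTransGen (Step M) (initState ar E) P' →
        ∃ α ∈ M, PiClosed M P' α) :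
    ∀ P', Relation.ReflTransGen (Step M) (initState ar E) P' →
      ∀ A ∈ P', ∀ ρ : Subst F, IsNormRenaming A ρ →
        ∀ ct₁ ∈ normC A ρ, ∀ ct₂ ∈ normC A ρ, ∀ σ : Subst F,
          ((CTerm.term ct₁).subst σ).Ground → ((CTerm.term ct₂).subst σ).Ground →
          (∀ u ∈ CTerm.constr ct₁, (u.subst σ).Ground) →
          (∀ u ∈ CTerm.constr ct₂, (u.subst σ).Ground) →
          ConstrSat M (substConstr (CTerm.constr ct₁) σ) →
          ConstrSat M (substConstr (CTerm.constr ct₂) σ) →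
          Entails (gndM M E) ((CTerm.term ct₁).subst σ) ((CTerm.term ct₂).subst σ) :=
  ccx_sound_general ar M E hclosed

end NGCC
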